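/- arXiv:2111.09933 — 4 statements merged into one kernel-verified Lean document; each statement's English description precedes it below -/
import Mathlib

section
/- The pricing transformation matrix T has full column rank m+1 whenever all historical price probabilities π(i) are strictly positive. Consequently T admits a left inverse R with RT = I. -/
open Matrix

/-- The pricing transformation matrix `T` (2m × (m+1)), 0-indexed. -/
def Tmat (m : ℕ) (π : Fin m → ℝ) : Matrix (Fin (2 * m)) (Fin (m + 1)) ℝ :=
  fun i j =>
    if h : i.val < m then (if i.val < j.val then π ⟨i.val, h⟩ else 0)
    else (if j.val + m ≤ i.val then π ⟨i.val - m, by have := i.isLt; omega⟩ else 0)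

/-!
Row `k + m` of `T` is `π k` times the indicator of the columns `≤ k`, so `T g = 0` makes every
partial sum `g 0 + ⋯ + g k` with `k < m` vanish, hence `g 0 = ⋯ = g (m - 1) = 0`. Row `m - 1` is
`π (m - 1)` times the indicator of the last column, which kills `g m`. Independent columns give full
column rank and, through a left inverse of the injective map `g ↦ T g`, a left inverse of `T`.
-/

open Finset

theorem eq_zero_of_forall_sum_Iic_eq_zero {ι M : Type*} [LinearOrder ι] [LocallyFiniteOrderBot ι]
    [WellFoundedLT ι] [AddCommMonoid M] {f : ι → M} (h : ∀ k, ∑ j ∈ Iic k, f j = 0) :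
    f = 0 := by
  funext k
  induction k using WellFoundedLT.induction with
  | _ k ih =>
    have hIio : ∑ j ∈ Iio k, f j = 0 := sum_eq_zero fun j hj => ih j (mem_Iio.mp hj)
    rw [Pi.zero_apply, ← h k, Iic_eq_cons_Iio, sum_cons, hIio, add_zero]

theorem Matrix.exists_mul_eq_one_of_linearIndependent_col {m n K : Type*} [Field K] [Fintype m]
    [Fintype n] [DecidableEq n] {A : Matrix m n K} (h : LinearIndependent K A.col) :
    ∃ B : Matrix n m K, B * A = 1 := by
  classical
  obtain ⟨f, hf⟩ := A.mulVecLin.exists_leftInverse_of_injective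
    (LinearMap.ker_eq_bot.mpr (mulVec_injective_iff.mpr h))
  refine ⟨LinearMap.toMatrix' f, ?_⟩
  simpa [LinearMap.toMatrix'_comp, ← toLin'_apply'] using congrArg LinearMap.toMatrix' hf

section Tmat

variable {m : ℕ} (π : Fin m → ℝ)

theorem Tmat_row_add_castSucc (k j : Fin m) :
    Tmat m π ⟨k + m, by omega⟩ j.castSucc = if j ≤ k then π k else 0 := by
  unfold Tmat
  rw [dif_neg (by simp)]
  simp only [Fin.val_castSucc, add_le_add_iff_right, Fin.le_def, add_tsub_cancel_right]

theorem Tmat_row_add_last (k : Fin m) : Tmat m π ⟨k + m, by omega⟩ (Fin.last m) = 0 := by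
  unfold Tmat
  rw [dif_neg (by simp), if_neg (by simp)]

theorem Tmat_row_pred_castSucc (hm : 1 ≤ m) (j : Fin m) :
    Tmat m π ⟨m - 1, by omega⟩ j.castSucc = 0 := by
  unfold Tmat
  rw [dif_pos (by simp; omega), if_neg (by simp; omega)]

theorem Tmat_row_pred_last (hm : 1 ≤ m) :
    Tmat m π ⟨m - 1, by omega⟩ (Fin.last m) = π ⟨m - 1, by omega⟩ := by
  unfold Tmat
  rw [dif_pos (by simp; omega), if_pos (by simp; omega)]

theorem mulVec_Tmat_row_add (g : Fin (m + 1) → ℝ) (k : Fin m) :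
    (Tmat m π *ᵥ g) ⟨k + m, by omega⟩ = π k * ∑ j ∈ Iic k, g j.castSucc := by
  simp only [mulVec, dotProduct, Fin.sum_univ_castSucc, Tmat_row_add_castSucc, Tmat_row_add_last,
    zero_mul, add_zero, ite_mul, sum_ite, sum_const_zero, mul_sum]
  congr 1
  ext j
  simp

theorem mulVec_Tmat_row_pred (hm : 1 ≤ m) (g : Fin (m + 1) → ℝ) :
    (Tmat m π *ᵥ g) ⟨m - 1, by omega⟩ = π ⟨m - 1, by omega⟩ * g (Fin.last m) := by
  simp [mulVec, dotProduct, Fin.sum_univ_castSucc, Tmat_row_pred_castSucc π hm,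
    Tmat_row_pred_last π hm]

theorem linearIndependent_col_Tmat (hm : 1 ≤ m) (hπ : ∀ i, π i ≠ 0) :
    LinearIndependent ℝ (Tmat m π).col := by
  rw [← mulVec_injective_iff, ← coe_mulVecLin, ← LinearMap.ker_eq_bot, ker_mulVecLin_eq_bot_iff]
  intro g hg
  have hcast : (fun k : Fin m => g k.castSucc) = 0 := eq_zero_of_forall_sum_Iic_eq_zero fun k =>
    (mul_eq_zero.mp (by rw [← mulVec_Tmat_row_add, hg, Pi.zero_apply])).resolve_left (hπ k)
  have hlast : g (Fin.last m) = 0 :=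
    (mul_eq_zero.mp (by rw [← mulVec_Tmat_row_pred π hm, hg, Pi.zero_apply])).resolve_left (hπ _)
  funext j
  induction j using Fin.lastCases with
  | last => exact hlast
  | cast k => exact congrFun hcast k

end Tmat

/-- If all historical price probabilities are strictly positive, `T` has
linearly independent columns, full rank `m+1`, and admits a left inverse. -/
theorem stmt_2 (m : ℕ) (hm : 1 ≤ m) (π : Fin m → ℝ) (hπpos : ∀ i, 0 < π i) :
    LinearIndependent ℝ (fun j : Fin (m + 1) => (Tmat m π)ᵀ j) ∧
    (Tmat m π).rank = m + 1 ∧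
    ∃ R : Matrix (Fin (m + 1)) (Fin (2 * m)) ℝ, R * Tmat m π = 1 := by
  have hcol := linearIndependent_col_Tmat π hm fun i => (hπpos i).ne'
  refine ⟨hcol, ?_, exists_mul_eq_one_of_linearIndependent_col hcol⟩
  rw [← rank_transpose, LinearIndependent.rank_matrix hcol, Fintype.card_fin]
end

section
/- Among all left inverses R of a full-column-rank matrix T (with RT = I), the quadratic form lᵀ R D Rᵀ l, for a fixed vector l and fixed positive-definite diagonal matrix D, is minimized by R_MV where R_MVᵀ = (Tᵀ D⁻¹ T)⁻¹ Tᵀ D⁻¹; that is, for any R with RT = I, lᵀ R_MV D R_MVᵀ l ≤ lᵀ R D Rᵀ l. -/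
/-!
For every left inverse `S` of `T` one has `R_MV D Sᵀ = (Tᵀ D⁻¹ T)⁻¹`, so the cross term
`R_MV D (R - R_MV)ᵀ` vanishes and `R D Rᵀ = R_MV D R_MVᵀ + (R - R_MV) D (R - R_MV)ᵀ`,
where the last summand is positive semidefinite.
-/

open Matrix

namespace Matrix

variable {m n R : Type*} [Fintype n] [CommRing R]

theorem mul_inv_mul_mul_transpose_of_mul_eq_one [Fintype m] [DecidableEq m] [DecidableEq n]
    {D : Matrix n n R} (hD : IsUnit D.det) (G : Matrix m m R) {T : Matrix n m R} {S : Matrix m n R}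
    (hS : S * T = 1) : G * Tᵀ * D⁻¹ * D * Sᵀ = G := by
  rw [Matrix.mul_assoc _ D⁻¹, nonsing_inv_mul D hD, Matrix.mul_one, Matrix.mul_assoc,
    ← transpose_mul, hS, transpose_one, Matrix.mul_one]

theorem mul_mul_transpose_eq_add_of_cross_eq_zero {D : Matrix n n R} (hD : Dᵀ = D)
    {P Q : Matrix m n R} (hPQ : P * D * (Q - P)ᵀ = 0) :
    Q * D * Qᵀ = P * D * Pᵀ + (Q - P) * D * (Q - P)ᵀ := by
  have hQP : (Q - P) * D * Pᵀ = 0 := by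
    simpa [transpose_mul, hD, Matrix.mul_assoc] using congrArg transpose hPQ
  calc Q * D * Qᵀ = (P + (Q - P)) * D * (P + (Q - P))ᵀ := by rw [add_sub_cancel]
    _ = P * D * Pᵀ + (Q - P) * D * (Q - P)ᵀ := by
      rw [transpose_add, Matrix.add_mul, Matrix.add_mul, Matrix.mul_add, Matrix.mul_add, hPQ,
        hQP]
      abel

variable [Fintype m] [PartialOrder R] [StarRing R] [StarOrderedRing R] [TrivialStar R]

theorem dotProduct_mulVec_mul_mul_transpose_le_of_cross_eq_zero {D : Matrix n n R}
    (hD : D.PosSemidef) {P Q : Matrix m n R} (hPQ : P * D * (Q - P)ᵀ = 0) (l : m → R) :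
    l ⬝ᵥ (P * D * Pᵀ) *ᵥ l ≤ l ⬝ᵥ (Q * D * Qᵀ) *ᵥ l := by
  have hDT : Dᵀ = D := by
    simpa [conjTranspose_eq_transpose_of_trivial] using hD.isHermitian.eq
  have hnonneg : 0 ≤ l ⬝ᵥ ((Q - P) * D * (Q - P)ᵀ) *ᵥ l := by
    simpa [conjTranspose_eq_transpose_of_trivial] using
      (hD.mul_mul_conjTranspose_same (Q - P)).dotProduct_mulVec_nonneg l
  rw [mul_mul_transpose_eq_add_of_cross_eq_zero hDT hPQ, add_mulVec, dotProduct_add]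
  exact le_add_of_nonneg_right hnonneg

end Matrix

theorem stmt_5_general (n k : ℕ) (T : Matrix (Fin n) (Fin k) ℝ)
    (d : Fin n → ℝ) (hd : ∀ i, 0 < d i) (l : Fin k → ℝ)
    (RMV : Matrix (Fin k) (Fin n) ℝ)
    (hRMV : RMVᵀ = ((Tᵀ * (Matrix.diagonal d)⁻¹ * T)⁻¹ * Tᵀ * (Matrix.diagonal d)⁻¹)ᵀ)
    (hRMVT : RMV * T = 1) :
    ∀ R : Matrix (Fin k) (Fin n) ℝ, R * T = 1 →
      l ⬝ᵥ (RMV * Matrix.diagonal d * RMVᵀ).mulVec l ≤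
        l ⬝ᵥ (R * Matrix.diagonal d * Rᵀ).mulVec l := by
  intro R hRT
  obtain rfl : RMV = _ := transpose_injective hRMV
  have hdet : IsUnit (diagonal d).det := by
    simpa [det_diagonal, Finset.prod_ne_zero_iff] using fun i => (hd i).ne'
  refine dotProduct_mulVec_mul_mul_transpose_le_of_cross_eq_zero
    (PosSemidef.diagonal fun i => (hd i).le) ?_ l
  rw [transpose_sub, Matrix.mul_sub, mul_inv_mul_mul_transpose_of_mul_eq_one hdet _ hRT,
    mul_inv_mul_mul_transpose_of_mul_eq_one hdet _ hRMVT, sub_self]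

/-- Among all left inverses `R` of `T`, the quadratic form `lᵀ R D Rᵀ l` is
minimized by `R_MV` with `R_MVᵀ = (Tᵀ D⁻¹ T)⁻¹ Tᵀ D⁻¹` (Lemma 3). -/
theorem stmt_5 (n k : ℕ) (T : Matrix (Fin n) (Fin k) ℝ)
    (hT : LinearIndependent ℝ (fun j : Fin k => Tᵀ j))
    (d : Fin n → ℝ) (hd : ∀ i, 0 < d i) (l : Fin k → ℝ)
    (RMV : Matrix (Fin k) (Fin n) ℝ)
    (hRMV : RMVᵀ = ((Tᵀ * (Matrix.diagonal d)⁻¹ * T)⁻¹ * Tᵀ * (Matrix.diagonal d)⁻¹)ᵀ)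
    (hRMVT : RMV * T = 1) :
    ∀ R : Matrix (Fin k) (Fin n) ℝ, R * T = 1 →
      l ⬝ᵥ (RMV * Matrix.diagonal d * RMVᵀ).mulVec l ≤
        l ⬝ᵥ (R * Matrix.diagonal d * Rᵀ).mulVec l :=
  stmt_5_general n k T d hd l RMV hRMV hRMVT
end

section
/- The IPS matrix R_IPS, defined by (R_IPS)_{i,j} = −1/π(i) if i = j ≤ m, (R_IPS)_{i,j} = 1/π(i−1) if i = j+1 and j ≤ m, and 0 otherwise, satisfies the generalized-inverse condition Tᵀ R_IPSᵀ l = l for every loss vector l ∈ ℝ^{m+1} whose first coordinate is treated consistently, where T is the pricing transformation matrix. -/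
/-!
Column `i < m` of `R_IPS` is `(e_{i+1} - e_i) / π i` and row `i < m` of `T` is `π i` times
the indicator of `{k | i < k}`, while the columns of `R_IPS` beyond `m` vanish. Hence the
weights cancel and `R_IPS T = 1 - e₀ 𝟙ᵀ`: its entry `(p, k)` is
`[1 ≤ p ≤ k] - [p < k] = [p = k] - [p = 0]`. Therefore `Tᵀ R_IPSᵀ l = l - l₀ 𝟙`, which is `l`
as soon as `l₀ = 0`.
-/

open Matrix

/-- The IPS matrix ((m+1) × 2m), 0-indexed: column `j < m` has `-1/π j` in row
`j` and `1/π j` in row `j+1`; columns `j ≥ m` are zero. -/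
noncomputable def RIPS (m : ℕ) (π : Fin m → ℝ) : Matrix (Fin (m + 1)) (Fin (2 * m)) ℝ :=
  fun i j =>
    if h : j.val < m then
      (if i.val = j.val then -1 / π ⟨j.val, h⟩
       else if i.val = j.val + 1 then 1 / π ⟨j.val, h⟩ else 0)
    else 0

lemma Fin.sum_ite_val_eq_and {M : Type*} [AddCommMonoid M] {n a : ℕ} (P : Prop) [Decidable P]
    (h : P → a < n) (x : M) :
    ∑ i : Fin n, (if i.val = a ∧ P then x else 0) = if P then x else 0 := by
  by_cases hP : P
  · simp only [hP, and_true, if_true]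
    rw [Finset.sum_eq_single ⟨a, h hP⟩] <;> simp +contextual [Fin.ext_iff]
  · simp [hP]

lemma RIPS_apply_mul_Tmat_apply {m : ℕ} {π : Fin m → ℝ} (hπ : ∀ i, π i ≠ 0)
    (p k : Fin (m + 1)) (i : Fin (2 * m)) :
    RIPS m π p i * Tmat m π i k =
      (if i.val = p.val - 1 ∧ (1 ≤ p.val ∧ p.val ≤ k.val) then 1 else 0) -
        (if i.val = p.val ∧ p.val < k.val then 1 else 0) := by
  by_cases hi : i.val < m
  · have := hπ ⟨i, hi⟩
    simp only [RIPS, Tmat, dif_pos hi]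
    split_ifs <;> first | omega | (field_simp; ring)
  · have hp := p.isLt
    have hk := k.isLt
    simp only [RIPS, dif_neg hi, zero_mul]
    split_ifs <;> first | omega | ring

lemma RIPS_mul_Tmat_apply {m : ℕ} {π : Fin m → ℝ} (hπ : ∀ i, π i ≠ 0)
    (p k : Fin (m + 1)) :
    (RIPS m π * Tmat m π) p k =
      (if 1 ≤ p.val ∧ p.val ≤ k.val then 1 else 0) - (if p.val < k.val then 1 else 0) := by
  have hk := k.isLt
  rw [mul_apply, Finset.sum_congr rfl fun i _ => RIPS_apply_mul_Tmat_apply hπ p k i,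
    Finset.sum_sub_distrib, Fin.sum_ite_val_eq_and _ (by omega) _,
    Fin.sum_ite_val_eq_and _ (by omega) _]

theorem RIPS_mul_Tmat {m : ℕ} {π : Fin m → ℝ} (hπ : ∀ i, π i ≠ 0) :
    RIPS m π * Tmat m π = 1 - vecMulVec (Pi.single 0 1) 1 := by
  ext p k
  rw [RIPS_mul_Tmat_apply hπ, Matrix.sub_apply, one_apply, vecMulVec_apply, Pi.single_apply]
  simp only [Fin.ext_iff, Fin.val_zero, Pi.one_apply, mul_one]
  split_ifs <;> first | omega | norm_num

theorem stmt_9_general (m : ℕ) (π : Fin m → ℝ) (hπpos : ∀ i, 0 < π i)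
    (l : Fin (m + 1) → ℝ) (hl0 : l 0 = 0) :
    (Tmat m π)ᵀ.mulVec ((RIPS m π)ᵀ.mulVec l) = l := by
  rw [mulVec_transpose, mulVec_transpose, vecMul_vecMul, RIPS_mul_Tmat fun i => (hπpos i).ne',
    vecMul_sub, vecMul_one, vecMul_vecMulVec, dotProduct_single_one, hl0, zero_smul, sub_zero]

/-- `R_IPS` is a generalized inverse of `T` along every loss vector `l` whose
first coordinate (the loss at the zero valuation `p₀`) is `0`:
`Tᵀ R_IPSᵀ l = l`. -/
theorem stmt_9 (m : ℕ) (hm : 1 ≤ m) (π : Fin m → ℝ) (hπpos : ∀ i, 0 < π i)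
    (l : Fin (m + 1) → ℝ) (hl0 : l 0 = 0) :
    (Tmat m π)ᵀ.mulVec ((RIPS m π)ᵀ.mulVec l) = l :=
  stmt_9_general m π hπpos l hl0
end

section
/- For any probability vector f on n ≥ 2 outcomes and any vector x ∈ ℝ^n, the variance form ∑ᵢ fᵢxᵢ² − (∑ᵢ fᵢxᵢ)² is maximized over probability vectors f at a distribution supported on at most two points: specifically, sup over the probability simplex of ∑ fᵢxᵢ² − (∑ fᵢxᵢ)² equals max_{i,j} (xᵢ − xⱼ)²/4, attained at f = (eᵢ + eⱼ)/2 for the maximizing pair. -/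
/-!
For weights `f` on the simplex and values in `[m, M]`, the pointwise bound
`(x - m) (M - x) ≥ 0`, i.e. `x² ≤ (M + m) x - M m`, averages to
`E x² ≤ (M + m) μ - M m` with `μ = E x`, so the variance is at most
`(M + m) μ - M m - μ² = (M - m)² / 4 - (μ - (M + m) / 2)² ≤ (M - m)² / 4`.
The uniform distribution on an argmax and an argmin of `x` attains this bound.
-/

section WeightedVariance

variable {ι : Type*}

def weightedVariance [Fintype ι] (f x : ι → ℝ) : ℝ :=
  (∑ i, f i * x i ^ 2) - (∑ i, f i * x i) ^ 2

theorem weightedVariance_le [Fintype ι] {f x : ι → ℝ} {m M : ℝ} (hf0 : ∀ i, 0 ≤ f i)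
    (hf1 : ∑ i, f i = 1) (hm : ∀ i, m ≤ x i) (hM : ∀ i, x i ≤ M) :
    weightedVariance f x ≤ (M - m) ^ 2 / 4 := by
  have hsq : ∑ i, f i * x i ^ 2 ≤ ∑ i, f i * ((M + m) * x i - M * m) := by
    gcongr with i
    · exact hf0 i
    · nlinarith [hm i, hM i]
  have hlin : ∑ i, f i * ((M + m) * x i - M * m) = (M + m) * ∑ i, f i * x i - M * m := by
    simp only [mul_sub, mul_left_comm (f _), Finset.sum_sub_distrib, ← Finset.mul_sum,
      ← Finset.sum_mul, hf1, one_mul]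
  unfold weightedVariance
  nlinarith [sq_nonneg (∑ i, f i * x i - (M + m) / 2)]

variable [DecidableEq ι]

noncomputable def midpointWeights (i j : ι) (k : ι) : ℝ :=
  ((if k = i then 1 else 0) + (if k = j then 1 else 0)) / 2

theorem midpointWeights_nonneg (i j k : ι) : 0 ≤ midpointWeights i j k := by
  unfold midpointWeights
  positivity

variable [Fintype ι]

theorem sum_midpointWeights_mul (i j : ι) (g : ι → ℝ) :
    ∑ k, midpointWeights i j k * g k = (g i + g j) / 2 := by
  simp only [midpointWeights, add_div, add_mul, Finset.sum_add_distrib, div_mul_eq_mul_div,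
    ite_mul, one_mul, zero_mul, ← Finset.sum_div, Finset.sum_ite_eq', Finset.mem_univ, if_true]

theorem sum_midpointWeights (i j : ι) : ∑ k, midpointWeights i j k = 1 := by
  simpa using sum_midpointWeights_mul i j (fun _ => 1)

theorem weightedVariance_midpointWeights (i j : ι) (x : ι → ℝ) :
    weightedVariance (midpointWeights i j) x = (x i - x j) ^ 2 / 4 := by
  rw [weightedVariance, sum_midpointWeights_mul, sum_midpointWeights_mul]
  ring

end WeightedVariance

/-- The variance form `V(f) = ∑ fᵢxᵢ² − (∑ fᵢxᵢ)²` over the probability simplex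
is maximized at a two-point distribution, with maximum value
`(max x − min x)² / 4`. -/
theorem stmt_11 (n : ℕ) (hn : 2 ≤ n) (x : Fin n → ℝ) :
    IsGreatest {v : ℝ | ∃ f : Fin n → ℝ, (∀ i, 0 ≤ f i) ∧ (∑ i, f i = 1) ∧
        v = (∑ i, f i * x i ^ 2) - (∑ i, f i * x i) ^ 2}
      (((⨆ i, x i) - (⨅ i, x i)) ^ 2 / 4) ∧
    ∃ i j : Fin n, (∀ k, x k ≤ x i) ∧ (∀ k, x j ≤ x k) ∧
      (∑ k, (fun k => ((if k = i then (1 : ℝ) else 0) +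
          (if k = j then 1 else 0)) / 2) k * x k ^ 2) -
        (∑ k, (fun k => ((if k = i then (1 : ℝ) else 0) +
          (if k = j then 1 else 0)) / 2) k * x k) ^ 2 =
        ((⨆ i, x i) - (⨅ i, x i)) ^ 2 / 4 := by
  have : Nonempty (Fin n) := ⟨⟨0, by omega⟩⟩
  obtain ⟨i, hi⟩ := Finite.exists_max x
  obtain ⟨j, hj⟩ := Finite.exists_min x
  have hsup : (⨆ k, x k) = x i := le_antisymm (ciSup_le hi) (le_ciSup (Finite.bddAbove_range x) i)
  have hinf : (⨅ k, x k) = x j := le_antisymm (ciInf_le (Finite.bddBelow_range x) j) (le_ciInf hj)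
  have hval : weightedVariance (midpointWeights i j) x = ((⨆ k, x k) - (⨅ k, x k)) ^ 2 / 4 := by
    rw [weightedVariance_midpointWeights, hsup, hinf]
  refine ⟨⟨⟨midpointWeights i j, midpointWeights_nonneg i j, sum_midpointWeights i j,
    hval.symm⟩, ?_⟩, i, j, hi, hj, hval⟩
  rintro v ⟨f, hf0, hf1, rfl⟩
  rw [hsup, hinf]
  exact weightedVariance_le hf0 hf1 hj hi
end
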